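/- arXiv:1911.11302 — 3 statements merged into one kernel-verified Lean document; each statement's English description precedes it below -/
import Mathlib

section
/- The coordinated parallel composition k ∥ ℓ of two n-ary lenses, with feet the pairwise products of corresponding feet, componentwise corrs and componentwise propagation, is well-behaved (respectively very well-behaved, respectively invertible) whenever both components are. -/
set_option autoImplicit false

/-- A model space: a category of models and updates, equipped with a relation `K`
of sequentially compatible consecutive updates, a class `D` of mergeable (concurrently
compatible) spans, and a merge operation. -/
structure ModelSpace where
  Obj : Type
  Hom : Obj → Obj → Type
  id : (A : Obj) → Hom A A
  comp : {A B C : Obj} → Hom A B → Hom B C → Hom A C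
  id_comp : ∀ {A B : Obj} (f : Hom A B), comp (id A) f = f
  comp_id : ∀ {A B : Obj} (f : Hom A B), comp f (id B) = f
  assoc : ∀ {A B C E : Obj} (f : Hom A B) (g : Hom B C) (h : Hom C E),
    comp (comp f g) h = comp f (comp g h)
  K : {X A Y : Obj} → Hom X A → Hom A Y → Prop
  D : {A A1 A2 : Obj} → Hom A A1 → Hom A A2 → Prop
  mergeObj : {A A1 A2 : Obj} → (u1 : Hom A A1) → (u2 : Hom A A2) → D u1 u2 → Obj
  merge1 : {A A1 A2 : Obj} → (u1 : Hom A A1) → (u2 : Hom A A2) → (h : D u1 u2) →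
    Hom A1 (mergeObj u1 u2 h)
  merge2 : {A A1 A2 : Obj} → (u1 : Hom A A1) → (u2 : Hom A A2) → (h : D u1 u2) →
    Hom A2 (mergeObj u1 u2 h)
  merge_comm : ∀ {A A1 A2 : Obj} (u1 : Hom A A1) (u2 : Hom A A2) (h : D u1 u2),
    comp u1 (merge1 u1 u2 h) = comp u2 (merge2 u1 u2 h)

/-- Transport an update along an equality of its source object. -/
def ModelSpace.castSrc (M : ModelSpace) {X Y T : M.Obj} (h : X = Y) (f : M.Hom X T) :
    M.Hom Y T := cast (congrArg (fun Z => M.Hom Z T) h) f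

/-- Transport an update along an equality of its target object. -/
def ModelSpace.castTgt (M : ModelSpace) {S T T' : M.Obj} (h : T = T') (f : M.Hom S T) :
    M.Hom S T' := cast (congrArg (fun Z => M.Hom S Z) h) f
/-- A multiary (symmetric) delta lens with amendment, over an index type `ι` of feet. -/
structure SymLens (ι : Type) where
  Sp : ι → ModelSpace
  Corr : Type
  bdry : (i : ι) → Corr → (Sp i).Obj
  ppgObj : (i : ι) → (R : Corr) → {A' : (Sp i).Obj} →
    (Sp i).Hom (bdry i R) A' → (j : ι) → (Sp j).Obj
  ppg : (i : ι) → (R : Corr) → {A' : (Sp i).Obj} →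
    (u : (Sp i).Hom (bdry i R) A') → (j : ι) → (h : j ≠ i) →
    (Sp j).Hom (bdry j R) (ppgObj i R u j)
  amend : (i : ι) → (R : Corr) → {A' : (Sp i).Obj} →
    (u : (Sp i).Hom (bdry i R) A') → (Sp i).Hom A' (ppgObj i R u i)
  ppgCorr : (i : ι) → (R : Corr) → {A' : (Sp i).Obj} →
    (Sp i).Hom (bdry i R) A' → Corr
  ppgCorr_bdry : ∀ (i : ι) (R : Corr) {A' : (Sp i).Obj}
    (u : (Sp i).Hom (bdry i R) A') (j : ι),
    bdry j (ppgCorr i R u) = ppgObj i R u j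
/-- Well-behavedness of a multiary lens: Stability and Reflect1-3. -/
structure SymLens.WellBehaved {ι : Type} (ℓ : SymLens ι) : Prop where
  stab_obj : ∀ (i : ι) (R : ℓ.Corr) (j : ι),
    ℓ.ppgObj i R ((ℓ.Sp i).id (ℓ.bdry i R)) j = ℓ.bdry j R
  stab_ppg : ∀ (i : ι) (R : ℓ.Corr) (j : ι) (h : j ≠ i),
    HEq (ℓ.ppg i R ((ℓ.Sp i).id (ℓ.bdry i R)) j h) ((ℓ.Sp j).id (ℓ.bdry j R))
  stab_amend : ∀ (i : ι) (R : ℓ.Corr),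
    HEq (ℓ.amend i R ((ℓ.Sp i).id (ℓ.bdry i R))) ((ℓ.Sp i).id (ℓ.bdry i R))
  stab_corr : ∀ (i : ι) (R : ℓ.Corr), ℓ.ppgCorr i R ((ℓ.Sp i).id (ℓ.bdry i R)) = R
  reflect1 : ∀ (i : ι) (R : ℓ.Corr) {A' : (ℓ.Sp i).Obj}
    (u : (ℓ.Sp i).Hom (ℓ.bdry i R) A'), (ℓ.Sp i).K u (ℓ.amend i R u)
  reflect2_obj : ∀ (i : ι) (R : ℓ.Corr) {A' : (ℓ.Sp i).Obj}
    (u : (ℓ.Sp i).Hom (ℓ.bdry i R) A') (j : ι), j ≠ i →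
    ℓ.ppgObj i R ((ℓ.Sp i).comp u (ℓ.amend i R u)) j = ℓ.ppgObj i R u j
  reflect2 : ∀ (i : ι) (R : ℓ.Corr) {A' : (ℓ.Sp i).Obj}
    (u : (ℓ.Sp i).Hom (ℓ.bdry i R) A') (j : ι) (h : j ≠ i),
    HEq (ℓ.ppg i R ((ℓ.Sp i).comp u (ℓ.amend i R u)) j h) (ℓ.ppg i R u j h)
  reflect3_obj : ∀ (i : ι) (R : ℓ.Corr) {A' : (ℓ.Sp i).Obj}
    (u : (ℓ.Sp i).Hom (ℓ.bdry i R) A'),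
    ℓ.ppgObj i R ((ℓ.Sp i).comp u (ℓ.amend i R u)) i = ℓ.ppgObj i R u i
  reflect3 : ∀ (i : ι) (R : ℓ.Corr) {A' : (ℓ.Sp i).Obj}
    (u : (ℓ.Sp i).Hom (ℓ.bdry i R) A'),
    HEq (ℓ.amend i R ((ℓ.Sp i).comp u (ℓ.amend i R u))) ((ℓ.Sp i).id (ℓ.ppgObj i R u i))
/-- The update `ṽ` of the K-Putput law: the complement of the amendment in the merge
of `v` with the amendment of `u`, re-sourced at the new corr. -/
def SymLens.kppAux {ι : Type} (ℓ : SymLens ι) (i : ι) (R : ℓ.Corr)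
    {A' B0 : (ℓ.Sp i).Obj} (u : (ℓ.Sp i).Hom (ℓ.bdry i R) A')
    (v : (ℓ.Sp i).Hom A' B0) (hD : (ℓ.Sp i).D v (ℓ.amend i R u)) :
    (ℓ.Sp i).Hom (ℓ.bdry i (ℓ.ppgCorr i R u))
      ((ℓ.Sp i).mergeObj v (ℓ.amend i R u) hD) :=
  (ℓ.Sp i).castSrc (ℓ.ppgCorr_bdry i R u i).symm
    ((ℓ.Sp i).merge2 v (ℓ.amend i R u) hD)

/-- Very well-behaved lenses: well-behaved plus the K-Putput law. -/
structure SymLens.VeryWellBehaved {ι : Type} (ℓ : SymLens ι)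
    extends SymLens.WellBehaved ℓ : Prop where
  kpp_obj : ∀ (i : ι) (R : ℓ.Corr) {A' B0 : (ℓ.Sp i).Obj}
    (u : (ℓ.Sp i).Hom (ℓ.bdry i R) A') (v : (ℓ.Sp i).Hom A' B0),
    (ℓ.Sp i).K u v → ∀ (hD : (ℓ.Sp i).D v (ℓ.amend i R u)) (j : ι), j ≠ i →
    ℓ.ppgObj i R ((ℓ.Sp i).comp u v) j =
      ℓ.ppgObj i (ℓ.ppgCorr i R u) (ℓ.kppAux i R u v hD) j
  kpp_ppg : ∀ (i : ι) (R : ℓ.Corr) {A' B0 : (ℓ.Sp i).Obj}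
    (u : (ℓ.Sp i).Hom (ℓ.bdry i R) A') (v : (ℓ.Sp i).Hom A' B0),
    (ℓ.Sp i).K u v → ∀ (hD : (ℓ.Sp i).D v (ℓ.amend i R u)) (j : ι) (hj : j ≠ i),
    HEq (ℓ.ppg i R ((ℓ.Sp i).comp u v) j hj)
      ((ℓ.Sp j).comp (ℓ.ppg i R u j hj)
        ((ℓ.Sp j).castSrc (ℓ.ppgCorr_bdry i R u j)
          (ℓ.ppg i (ℓ.ppgCorr i R u) (ℓ.kppAux i R u v hD) j hj)))
  kpp_K : ∀ (i : ι) (R : ℓ.Corr) {A' B0 : (ℓ.Sp i).Obj}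
    (u : (ℓ.Sp i).Hom (ℓ.bdry i R) A') (v : (ℓ.Sp i).Hom A' B0),
    (ℓ.Sp i).K u v → ∀ (hD : (ℓ.Sp i).D v (ℓ.amend i R u)) (j : ι) (hj : j ≠ i),
    (ℓ.Sp j).K (ℓ.ppg i R u j hj)
      ((ℓ.Sp j).castSrc (ℓ.ppgCorr_bdry i R u j)
        (ℓ.ppg i (ℓ.ppgCorr i R u) (ℓ.kppAux i R u v hD) j hj))
  kpp_amend_obj : ∀ (i : ι) (R : ℓ.Corr) {A' B0 : (ℓ.Sp i).Obj}
    (u : (ℓ.Sp i).Hom (ℓ.bdry i R) A') (v : (ℓ.Sp i).Hom A' B0),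
    (ℓ.Sp i).K u v → ∀ (hD : (ℓ.Sp i).D v (ℓ.amend i R u)),
    ℓ.ppgObj i R ((ℓ.Sp i).comp u v) i =
      ℓ.ppgObj i (ℓ.ppgCorr i R u) (ℓ.kppAux i R u v hD) i
  kpp_amend : ∀ (i : ι) (R : ℓ.Corr) {A' B0 : (ℓ.Sp i).Obj}
    (u : (ℓ.Sp i).Hom (ℓ.bdry i R) A') (v : (ℓ.Sp i).Hom A' B0),
    (ℓ.Sp i).K u v → ∀ (hD : (ℓ.Sp i).D v (ℓ.amend i R u)),
    HEq (ℓ.amend i R ((ℓ.Sp i).comp u v))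
      ((ℓ.Sp i).comp ((ℓ.Sp i).merge1 v (ℓ.amend i R u) hD)
        (ℓ.amend i (ℓ.ppgCorr i R u) (ℓ.kppAux i R u v hD)))
/-- Weak invertibility (round-tripping) of a multiary lens. -/
def SymLens.Invertible {ι : Type} (ℓ : SymLens ι) : Prop :=
  ∀ (i : ι) (R : ℓ.Corr) {A' : (ℓ.Sp i).Obj} (u : (ℓ.Sp i).Hom (ℓ.bdry i R) A')
    (j : ι) (hj : j ≠ i),
    ℓ.ppgObj i R (ℓ.ppg j R (ℓ.ppg i R u j hj) i (Ne.symm hj)) j = ℓ.ppgObj i R u j ∧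
    HEq (ℓ.ppg i R (ℓ.ppg j R (ℓ.ppg i R u j hj) i (Ne.symm hj)) j hj)
      (ℓ.ppg i R u j hj)
/-- Product of two model spaces, with componentwise compatibility and merging. -/
def ModelSpace.prod (M N : ModelSpace) : ModelSpace where
  Obj := M.Obj × N.Obj
  Hom A B := M.Hom A.1 B.1 × N.Hom A.2 B.2
  id A := (M.id A.1, N.id A.2)
  comp f g := (M.comp f.1 g.1, N.comp f.2 g.2)
  id_comp f := by
    show (M.comp (M.id _) f.1, N.comp (N.id _) f.2) = f
    rw [M.id_comp, N.id_comp]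
  comp_id f := by
    show (M.comp f.1 (M.id _), N.comp f.2 (N.id _)) = f
    rw [M.comp_id, N.comp_id]
  assoc f g h := by
    show (M.comp (M.comp f.1 g.1) h.1, N.comp (N.comp f.2 g.2) h.2) =
      (M.comp f.1 (M.comp g.1 h.1), N.comp f.2 (N.comp g.2 h.2))
    rw [M.assoc, N.assoc]
  K f g := M.K f.1 g.1 ∧ N.K f.2 g.2
  D f g := M.D f.1 g.1 ∧ N.D f.2 g.2
  mergeObj u1 u2 h := (M.mergeObj u1.1 u2.1 h.1, N.mergeObj u1.2 u2.2 h.2)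
  merge1 u1 u2 h := (M.merge1 u1.1 u2.1 h.1, N.merge1 u1.2 u2.2 h.2)
  merge2 u1 u2 h := (M.merge2 u1.1 u2.1 h.1, N.merge2 u1.2 u2.2 h.2)
  merge_comm u1 u2 h :=
    congrArg₂ Prod.mk (M.merge_comm u1.1 u2.1 h.1) (N.merge_comm u1.2 u2.2 h.2)
/-- Coordinated parallel composition of two `ι`-ary lenses: componentwise on the
products of corresponding feet. -/
def SymLens.par {ι : Type} (k l : SymLens ι) : SymLens ι where
  Sp := fun i => (k.Sp i).prod (l.Sp i)
  Corr := k.Corr × l.Corr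
  bdry := fun i R => (k.bdry i R.1, l.bdry i R.2)
  ppgObj := fun i R {A'} u j => (k.ppgObj i R.1 u.1 j, l.ppgObj i R.2 u.2 j)
  ppg := fun i R {A'} u j hj => (k.ppg i R.1 u.1 j hj, l.ppg i R.2 u.2 j hj)
  amend := fun i R {A'} u => (k.amend i R.1 u.1, l.amend i R.2 u.2)
  ppgCorr := fun i R {A'} u => (k.ppgCorr i R.1 u.1, l.ppgCorr i R.2 u.2)
  ppgCorr_bdry := by
    intro i R A' u j
    show (k.bdry j (k.ppgCorr i R.1 u.1), l.bdry j (l.ppgCorr i R.2 u.2)) = _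
    rw [k.ppgCorr_bdry, l.ppgCorr_bdry]
theorem heq_prod {α α' β β' : Type} (hα : α = α') (hβ : β = β')
    {a : α} {a' : α'} {b : β} {b' : β'} (ha : HEq a a') (hb : HEq b b') :
    HEq ((a, b) : α × β) ((a', b') : α' × β') := by
  subst hα; subst hβ; rw [eq_of_heq ha, eq_of_heq hb]

theorem par_castSrc {ι : Type} (k l : SymLens ι) (j : ι)
    {X Y T : (((k.par l).Sp j)).Obj} (h : X = Y) (f : ((k.par l).Sp j).Hom X T) :
    ((k.par l).Sp j).castSrc h f =
      ((k.Sp j).castSrc (congrArg Prod.fst h) f.1,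
       (l.Sp j).castSrc (congrArg Prod.snd h) f.2) := by
  subst h; rfl

theorem par_kppAux {ι : Type} (k l : SymLens ι) (i : ι) (R : (k.par l).Corr)
    {A' B0 : ((k.par l).Sp i).Obj} (u : ((k.par l).Sp i).Hom ((k.par l).bdry i R) A')
    (v : ((k.par l).Sp i).Hom A' B0)
    (hD : ((k.par l).Sp i).D v ((k.par l).amend i R u)) :
    (k.par l).kppAux i R u v hD =
      (k.kppAux i R.1 u.1 v.1 hD.1, l.kppAux i R.2 u.2 v.2 hD.2) := by
  show ((k.par l).Sp i).castSrc _ _ = _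
  rw [par_castSrc]
  rfl

/-- Coordinated parallel composition preserves well-behavedness,
very well-behavedness and invertibility. -/
theorem stmt9 {ι : Type} (k l : SymLens ι) :
    (k.WellBehaved → l.WellBehaved → (k.par l).WellBehaved) ∧
    (k.VeryWellBehaved → l.VeryWellBehaved → (k.par l).VeryWellBehaved) ∧
    (k.Invertible → l.Invertible → (k.par l).Invertible) := by
  have wb : k.WellBehaved → l.WellBehaved → (k.par l).WellBehaved := by
    intro hk hl
    refine ⟨?_, ?_, ?_, ?_, ?_, ?_, ?_, ?_, ?_⟩
    · intro i R j
      exact congrArg₂ Prod.mk (hk.stab_obj i R.1 j) (hl.stab_obj i R.2 j)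
    · intro i R j h
      exact heq_prod (congrArg ((k.Sp j).Hom _) (hk.stab_obj i R.1 j))
        (congrArg ((l.Sp j).Hom _) (hl.stab_obj i R.2 j))
        (hk.stab_ppg i R.1 j h) (hl.stab_ppg i R.2 j h)
    · intro i R
      exact heq_prod (congrArg ((k.Sp i).Hom _) (hk.stab_obj i R.1 i))
        (congrArg ((l.Sp i).Hom _) (hl.stab_obj i R.2 i))
        (hk.stab_amend i R.1) (hl.stab_amend i R.2)
    · intro i R
      exact congrArg₂ Prod.mk (hk.stab_corr i R.1) (hl.stab_corr i R.2)
    · intro i R A' u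
      exact ⟨hk.reflect1 i R.1 u.1, hl.reflect1 i R.2 u.2⟩
    · intro i R A' u j hj
      exact congrArg₂ Prod.mk (hk.reflect2_obj i R.1 u.1 j hj)
        (hl.reflect2_obj i R.2 u.2 j hj)
    · intro i R A' u j hj
      exact heq_prod (congrArg ((k.Sp j).Hom _) (hk.reflect2_obj i R.1 u.1 j hj))
        (congrArg ((l.Sp j).Hom _) (hl.reflect2_obj i R.2 u.2 j hj))
        (hk.reflect2 i R.1 u.1 j hj) (hl.reflect2 i R.2 u.2 j hj)
    · intro i R A' u
      exact congrArg₂ Prod.mk (hk.reflect3_obj i R.1 u.1) (hl.reflect3_obj i R.2 u.2)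
    · intro i R A' u
      exact heq_prod (congrArg ((k.Sp i).Hom _) (hk.reflect3_obj i R.1 u.1))
        (congrArg ((l.Sp i).Hom _) (hl.reflect3_obj i R.2 u.2))
        (hk.reflect3 i R.1 u.1) (hl.reflect3 i R.2 u.2)
  refine ⟨wb, ?_, ?_⟩
  · intro hk hl
    refine ⟨wb hk.toWellBehaved hl.toWellBehaved, ?_, ?_, ?_, ?_, ?_⟩
    · intro i R A' B0 u v hK hD j hj
      rw [par_kppAux]
      exact congrArg₂ Prod.mk (hk.kpp_obj i R.1 u.1 v.1 hK.1 hD.1 j hj)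
        (hl.kpp_obj i R.2 u.2 v.2 hK.2 hD.2 j hj)
    · intro i R A' B0 u v hK hD j hj
      rw [par_kppAux, par_castSrc]
      exact heq_prod (congrArg ((k.Sp j).Hom _) (hk.kpp_obj i R.1 u.1 v.1 hK.1 hD.1 j hj))
        (congrArg ((l.Sp j).Hom _) (hl.kpp_obj i R.2 u.2 v.2 hK.2 hD.2 j hj))
        (hk.kpp_ppg i R.1 u.1 v.1 hK.1 hD.1 j hj)
        (hl.kpp_ppg i R.2 u.2 v.2 hK.2 hD.2 j hj)
    · intro i R A' B0 u v hK hD j hj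
      rw [par_kppAux, par_castSrc]
      exact ⟨hk.kpp_K i R.1 u.1 v.1 hK.1 hD.1 j hj,
        hl.kpp_K i R.2 u.2 v.2 hK.2 hD.2 j hj⟩
    · intro i R A' B0 u v hK hD
      rw [par_kppAux]
      exact congrArg₂ Prod.mk (hk.kpp_amend_obj i R.1 u.1 v.1 hK.1 hD.1)
        (hl.kpp_amend_obj i R.2 u.2 v.2 hK.2 hD.2)
    · intro i R A' B0 u v hK hD
      rw [par_kppAux]
      exact heq_prod (congrArg ((k.Sp i).Hom _) (hk.kpp_amend_obj i R.1 u.1 v.1 hK.1 hD.1))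
        (congrArg ((l.Sp i).Hom _) (hl.kpp_amend_obj i R.2 u.2 v.2 hK.2 hD.2))
        (hk.kpp_amend i R.1 u.1 v.1 hK.1 hD.1)
        (hl.kpp_amend i R.2 u.2 v.2 hK.2 hD.2)
  · intro hk hl
    intro i R A' u j hj
    refine ⟨congrArg₂ Prod.mk (hk i R.1 u.1 j hj).1 (hl i R.2 u.2 j hj).1, ?_⟩
    exact heq_prod (congrArg ((k.Sp j).Hom _) (hk i R.1 u.1 j hj).1)
        (congrArg ((l.Sp j).Hom _) (hl i R.2 u.2 j hj).1)
      (hk i R.1 u.1 j hj).2 (hl i R.2 u.2 j hj).2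
end

section
/- Star composition preserves (very) well-behavedness: given an n-ary lens k and binary lenses b₁,...,bₙ where the second foot of b_i is the i-th foot of k, all over well-behaved model spaces, satisfying the junction conditions (updates propagated into A_i by b_i are k-closed, and updates propagated into A_i by k are b_i-closed), if k and all b_i are well-behaved (respectively very well-behaved), then the star-composed n-ary lens k*(b₁,...,bₙ) is well-behaved (respectively very well-behaved). -/
set_option autoImplicit false

/-- A well-behaved model space. -/
structure ModelSpace.WellBehaved (M : ModelSpace) : Prop where
  K_id_right : ∀ {X A : M.Obj} (u : M.Hom X A), M.K u (M.id A)
  K_id_left : ∀ {A Y : M.Obj} (u' : M.Hom A Y), M.K (M.id A) u'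
  KK1 : ∀ {A B C E : M.Obj} (u : M.Hom A B) (v : M.Hom B C) (w : M.Hom C E),
    M.K u (M.comp v w) → M.K v w → M.K u v ∧ M.K (M.comp u v) w
  KK2 : ∀ {A B C E : M.Obj} (u : M.Hom A B) (v : M.Hom B C) (w : M.Hom C E),
    M.K (M.comp u v) w → M.K u v → M.K v w ∧ M.K u (M.comp v w)
  D_K : ∀ {A A1 A2 : M.Obj} (u1 : M.Hom A A1) (u2 : M.Hom A A2) (h : M.D u1 u2),
    M.K u1 (M.merge1 u1 u2 h) ∧ M.K u2 (M.merge2 u1 u2 h)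
  mergeSym_D : ∀ {A A1 A2 : M.Obj} (u1 : M.Hom A A1) (u2 : M.Hom A A2),
    M.D u1 u2 → M.D u2 u1
  mergeSym_obj : ∀ {A A1 A2 : M.Obj} (u1 : M.Hom A A1) (u2 : M.Hom A A2)
    (h : M.D u1 u2) (h' : M.D u2 u1), M.mergeObj u2 u1 h' = M.mergeObj u1 u2 h
  mergeSym_1 : ∀ {A A1 A2 : M.Obj} (u1 : M.Hom A A1) (u2 : M.Hom A A2)
    (h : M.D u1 u2) (h' : M.D u2 u1), HEq (M.merge1 u2 u1 h') (M.merge2 u1 u2 h)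
  mergeSym_2 : ∀ {A A1 A2 : M.Obj} (u1 : M.Hom A A1) (u2 : M.Hom A A2)
    (h : M.D u1 u2) (h' : M.D u2 u1), HEq (M.merge2 u2 u1 h') (M.merge1 u1 u2 h)
  mergeId_D : ∀ {A A' : M.Obj} (u : M.Hom A A'), M.D u (M.id A)
  mergeId_obj : ∀ {A A' : M.Obj} (u : M.Hom A A') (h : M.D u (M.id A)),
    M.mergeObj u (M.id A) h = A'
  mergeId_1 : ∀ {A A' : M.Obj} (u : M.Hom A A') (h : M.D u (M.id A)),
    HEq (M.merge1 u (M.id A) h) (M.id A')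
  mergeId_2 : ∀ {A A' : M.Obj} (u : M.Hom A A') (h : M.D u (M.id A)),
    HEq (M.merge2 u (M.id A) h) u
/-- An update of the `i`-th foot is `ℓ`-closed if the lens amends it identically
over every corr at which it can be propagated. -/
def SymLens.ClosedUpd {ι : Type} (ℓ : SymLens ι) (i : ι) {X A' : (ℓ.Sp i).Obj}
    (u : (ℓ.Sp i).Hom X A') : Prop :=
  ∀ (S : ℓ.Corr) (h : ℓ.bdry i S = X),
    ℓ.ppgObj i S ((ℓ.Sp i).castSrc h.symm u) i = A' ∧
    HEq (ℓ.amend i S ((ℓ.Sp i).castSrc h.symm u)) ((ℓ.Sp i).id A')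
/-- A binary symmetric lens between a "base" space `B` and a "view" space `A`. -/
structure BLens (B A : ModelSpace) where
  Corr : Type
  bB : Corr → B.Obj
  bA : Corr → A.Obj
  ppgBAObj : (R : Corr) → {B' : B.Obj} → B.Hom (bB R) B' → A.Obj
  ppgBA : (R : Corr) → {B' : B.Obj} → (u : B.Hom (bB R) B') → A.Hom (bA R) (ppgBAObj R u)
  amendBObj : (R : Corr) → {B' : B.Obj} → B.Hom (bB R) B' → B.Obj
  amendB : (R : Corr) → {B' : B.Obj} → (u : B.Hom (bB R) B') → B.Hom B' (amendBObj R u)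
  ppgBACorr : (R : Corr) → {B' : B.Obj} → B.Hom (bB R) B' → Corr
  ppgBACorr_bB : ∀ (R : Corr) {B' : B.Obj} (u : B.Hom (bB R) B'),
    bB (ppgBACorr R u) = amendBObj R u
  ppgBACorr_bA : ∀ (R : Corr) {B' : B.Obj} (u : B.Hom (bB R) B'),
    bA (ppgBACorr R u) = ppgBAObj R u
  ppgABObj : (R : Corr) → {A' : A.Obj} → A.Hom (bA R) A' → B.Obj
  ppgAB : (R : Corr) → {A' : A.Obj} → (v : A.Hom (bA R) A') → B.Hom (bB R) (ppgABObj R v)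
  amendAObj : (R : Corr) → {A' : A.Obj} → A.Hom (bA R) A' → A.Obj
  amendA : (R : Corr) → {A' : A.Obj} → (v : A.Hom (bA R) A') → A.Hom A' (amendAObj R v)
  ppgABCorr : (R : Corr) → {A' : A.Obj} → A.Hom (bA R) A' → Corr
  ppgABCorr_bB : ∀ (R : Corr) {A' : A.Obj} (v : A.Hom (bA R) A'),
    bB (ppgABCorr R v) = ppgABObj R v
  ppgABCorr_bA : ∀ (R : Corr) {A' : A.Obj} (v : A.Hom (bA R) A'),
    bA (ppgABCorr R v) = amendAObj R v
/-- A binary lens viewed as a symmetric lens over `Bool` (`false` = base, `true` = view). -/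
def BLens.toSym {B A : ModelSpace} (b : BLens B A) : SymLens Bool where
  Sp := fun i => match i with
    | false => B
    | true => A
  Corr := b.Corr
  bdry := fun i => match i with
    | false => fun R => b.bB R
    | true => fun R => b.bA R
  ppgObj := fun i R {A'} u j =>
    match i, A', u, j with
    | false, _, u, false => b.amendBObj R u
    | false, _, u, true => b.ppgBAObj R u
    | true, _, v, false => b.ppgABObj R v
    | true, _, v, true => b.amendAObj R v
  ppg := fun i R {A'} u j hj =>
    match i, A', u, j, hj with
    | false, _, _, false, hj => absurd rfl hj
    | false, _, u, true, _ => b.ppgBA R u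
    | true, _, v, false, _ => b.ppgAB R v
    | true, _, _, true, hj => absurd rfl hj
  amend := fun i R {A'} u =>
    match i, A', u with
    | false, _, u => b.amendB R u
    | true, _, v => b.amendA R v
  ppgCorr := fun i R {A'} u =>
    match i, A', u with
    | false, _, u => b.ppgBACorr R u
    | true, _, v => b.ppgABCorr R v
  ppgCorr_bdry := by
    intro i R A' u j
    cases i <;> cases j
    · exact b.ppgBACorr_bB R u
    · exact b.ppgBACorr_bA R u
    · exact b.ppgABCorr_bB R u
    · exact b.ppgABCorr_bA R u

/-- Well-behavedness of a binary lens. -/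
def BLens.WellBehaved {B A : ModelSpace} (b : BLens B A) : Prop :=
  b.toSym.WellBehaved

/-- (Weak) invertibility of a binary lens. -/
def BLens.Invertible {B A : ModelSpace} (b : BLens B A) : Prop :=
  b.toSym.Invertible

/-- All base-side updates of the binary lens are closed (identity amendments). -/
def BLens.BaseClosed {B A : ModelSpace} (b : BLens B A) : Prop :=
  ∀ (R : b.Corr) {B' : B.Obj} (u : B.Hom (b.bB R) B'),
    b.amendBObj R u = B' ∧ HEq (b.amendB R u) (B.id B')

/-- A view update is `b`-closed: the lens amends it identically over every
corr at which it can be propagated. -/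
def BLens.ClosedA {B A : ModelSpace} (b : BLens B A) {X A' : A.Obj}
    (v : A.Hom X A') : Prop :=
  ∀ (R : b.Corr) (h : b.bA R = X),
    b.amendAObj R (A.castSrc h.symm v) = A' ∧
    HEq (b.amendA R (A.castSrc h.symm v)) (A.id A')
/-- Very well-behavedness of a binary lens. -/
def BLens.VeryWellBehaved {B A : ModelSpace} (b : BLens B A) : Prop :=
  b.toSym.VeryWellBehaved
section Star

variable {ι : Type} [DecidableEq ι] (k : SymLens ι) (Bsp : ι → ModelSpace)
  (b : ∀ i, BLens (Bsp i) (k.Sp i))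

/-- A corr of the star composition: a central corr together with a corr for each
peripheral binary lens, compatible at the shared feet. -/
structure StarCorr where
  S : k.Corr
  rho : ∀ i, (b i).Corr
  compat : ∀ i, (b i).bA (rho i) = k.bdry i S

/-- The update propagated by `b i` into the `i`-th foot of `k`. -/
def starU (R : StarCorr k Bsp b) (i : ι) {B' : (Bsp i).Obj}
    (v : (Bsp i).Hom ((b i).bB (R.rho i)) B') :
    (k.Sp i).Hom (k.bdry i R.S) ((b i).ppgBAObj (R.rho i) v) :=
  (k.Sp i).castSrc (R.compat i) ((b i).ppgBA (R.rho i) v)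

/-- The update propagated by `k` to the `j`-th foot, re-sourced at `b j`'s view boundary. -/
def starW (R : StarCorr k Bsp b) (i : ι) {B' : (Bsp i).Obj}
    (v : (Bsp i).Hom ((b i).bB (R.rho i)) B') (j : ι) (hj : j ≠ i) :
    (k.Sp j).Hom ((b j).bA (R.rho j)) (k.ppgObj i R.S (starU k Bsp b R i v) j) :=
  (k.Sp j).castSrc (R.compat j).symm (k.ppg i R.S (starU k Bsp b R i v) j hj)

/-- Star composition of an `ι`-ary lens `k` with binary lenses `b i` sharing its
feet, under the junction conditions `J1`, `J2`. -/
def SymLens.star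
    (J1 : ∀ (i : ι) (R : (b i).Corr) {B' : (Bsp i).Obj}
      (u : (Bsp i).Hom ((b i).bB R) B'), k.ClosedUpd i ((b i).ppgBA R u))
    (J2 : ∀ (i j : ι) (hj : j ≠ i) (S : k.Corr) {A' : (k.Sp i).Obj}
      (u : (k.Sp i).Hom (k.bdry i S) A'), (b j).ClosedA (k.ppg i S u j hj)) :
    SymLens ι where
  Sp := Bsp
  Corr := StarCorr k Bsp b
  bdry := fun i R => (b i).bB (R.rho i)
  ppgObj := fun i R {B'} v j =>
    if h : j = i then
      cast (congrArg (fun z => (Bsp z).Obj) h.symm) ((b i).amendBObj (R.rho i) v)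
    else (b j).ppgABObj (R.rho j) (starW k Bsp b R i v j h)
  ppg := fun i R {B'} v j hj =>
    (Bsp j).castTgt (dif_neg hj).symm ((b j).ppgAB (R.rho j) (starW k Bsp b R i v j hj))
  amend := fun i R {B'} v =>
    (Bsp i).castTgt (dif_pos rfl).symm ((b i).amendB (R.rho i) v)
  ppgCorr := fun i R {B'} v =>
    { S := k.ppgCorr i R.S (starU k Bsp b R i v)
      rho := fun j =>
        if h : j = i then
          cast (congrArg (fun z => (b z).Corr) h.symm) ((b i).ppgBACorr (R.rho i) v)
        else (b j).ppgABCorr (R.rho j) (starW k Bsp b R i v j h)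
      compat := by
        intro j
        by_cases h : j = i
        · subst h
          try dsimp only
          rw [dif_pos rfl, k.ppgCorr_bdry]
          exact ((b j).ppgBACorr_bA (R.rho j) v).trans
            ((J1 j (R.rho j) v R.S (R.compat j).symm).1).symm
        · try dsimp only
          rw [dif_neg h, k.ppgCorr_bdry]
          exact ((b j).ppgABCorr_bA (R.rho j) _).trans
            ((J2 i j h R.S (starU k Bsp b R i v) (R.rho j) (R.compat j)).1) }
  ppgCorr_bdry := by
    intro i R B' v j
    by_cases h : j = i
    · subst h
      dsimp only
      rw [dif_pos rfl, dif_pos rfl]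
      exact (b j).ppgBACorr_bB (R.rho j) v
    · dsimp only
      rw [dif_neg h, dif_neg h]
      exact (b j).ppgABCorr_bB (R.rho j) _

end Star

/-!
The lens laws equate updates whose endpoints agree only propositionally, so updates are
compared as elements of the sigma type `ModelSpace.Arrow` of updates bundled with their
endpoints; every lens operation is a congruence for that equality.

Stability and Reflect1-3 of the star composition follow componentwise from those of `k` and
the `b i`. For K-Putput of `u; v` at the foot `B i`, the K-Putput of `b i` splits its
propagation to `A i` into two consecutive updates. By the first junction condition the first
of them is `k`-closed, so the K-Putput of `k` applies with a trivial merge; by the second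
junction condition the resulting updates at each `A j` are `b j`-closed, so the K-Putput of
`b j` again needs no merge.
-/

namespace ModelSpace

variable {M : ModelSpace}

def Arrow (M : ModelSpace) : Type := Σ X Y : M.Obj, M.Hom X Y

def Hom.arr {X Y : M.Obj} (f : M.Hom X Y) : M.Arrow := ⟨X, Y, f⟩

theorem Hom.arr_eq_arr_iff {X Y X' Y' : M.Obj} {f : M.Hom X Y} {g : M.Hom X' Y'} :
    f.arr = g.arr ↔ X = X' ∧ Y = Y' ∧ HEq f g := by
  constructor
  · intro h
    obtain ⟨rfl, h⟩ := Sigma.mk.inj h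
    obtain ⟨rfl, h⟩ := Sigma.mk.inj (eq_of_heq h)
    exact ⟨rfl, rfl, h⟩
  · rintro ⟨rfl, rfl, h⟩
    cases h
    rfl

theorem Hom.tgt_eq_of_arr_eq {X Y X' Y' : M.Obj} {f : M.Hom X Y} {g : M.Hom X' Y'}
    (h : f.arr = g.arr) : Y = Y' :=
  (Hom.arr_eq_arr_iff.mp h).2.1

theorem Hom.heq_of_arr_eq {X Y X' Y' : M.Obj} {f : M.Hom X Y} {g : M.Hom X' Y'}
    (h : f.arr = g.arr) : HEq f g :=
  (Hom.arr_eq_arr_iff.mp h).2.2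

theorem Hom.arr_eq_arr_of_heq {X Y Y' : M.Obj} {f : M.Hom X Y} {g : M.Hom X Y'}
    (hY : Y = Y') (h : HEq f g) : f.arr = g.arr :=
  Hom.arr_eq_arr_iff.mpr ⟨rfl, hY, h⟩

@[simp]
theorem castSrc_arr {X Y T : M.Obj} (h : X = Y) (f : M.Hom X T) :
    (M.castSrc h f).arr = f.arr := by
  subst h; rfl

@[simp]
theorem castTgt_arr {S T T' : M.Obj} (h : T = T') (f : M.Hom S T) :
    (M.castTgt h f).arr = f.arr := by
  subst h; rfl

theorem id_arr_congr {A A' : M.Obj} (h : A = A') : (M.id A).arr = (M.id A').arr := by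
  subst h; rfl

section Congr

variable {A B C A' B' C' : M.Obj} {f : M.Hom A B} {f' : M.Hom A' B'}

theorem comp_arr_congr {g : M.Hom B C} {g' : M.Hom B' C'} (hf : f.arr = f'.arr)
    (hg : g.arr = g'.arr) : (M.comp f g).arr = (M.comp f' g').arr := by
  obtain ⟨rfl, rfl, hf⟩ := Hom.arr_eq_arr_iff.mp hf
  obtain ⟨-, rfl, hg⟩ := Hom.arr_eq_arr_iff.mp hg
  cases hf; cases hg; rfl

theorem K_congr_arr {g : M.Hom B C} {g' : M.Hom B' C'} (hf : f.arr = f'.arr)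
    (hg : g.arr = g'.arr) : M.K f g ↔ M.K f' g' := by
  obtain ⟨rfl, rfl, hf⟩ := Hom.arr_eq_arr_iff.mp hf
  obtain ⟨-, rfl, hg⟩ := Hom.arr_eq_arr_iff.mp hg
  cases hf; cases hg; rfl

theorem D_congr_arr {g : M.Hom A C} {g' : M.Hom A' C'} (hf : f.arr = f'.arr)
    (hg : g.arr = g'.arr) : M.D f g ↔ M.D f' g' := by
  obtain ⟨rfl, rfl, hf⟩ := Hom.arr_eq_arr_iff.mp hf
  obtain ⟨-, rfl, hg⟩ := Hom.arr_eq_arr_iff.mp hg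
  cases hf; cases hg; rfl

theorem merge_arr_congr {g : M.Hom A C} {g' : M.Hom A' C'} (hf : f.arr = f'.arr)
    (hg : g.arr = g'.arr) (hD : M.D f g) (hD' : M.D f' g') :
    (M.merge1 f g hD).arr = (M.merge1 f' g' hD').arr ∧
      (M.merge2 f g hD).arr = (M.merge2 f' g' hD').arr := by
  obtain ⟨rfl, rfl, hf⟩ := Hom.arr_eq_arr_iff.mp hf
  obtain ⟨-, rfl, hg⟩ := Hom.arr_eq_arr_iff.mp hg
  cases hf; cases hg; exact ⟨rfl, rfl⟩

end Congr

theorem WellBehaved.exists_merge2_arr_of_arr_eq_id (hM : M.WellBehaved) {A Z T : M.Obj}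
    {w : M.Hom A Z} (hw : w.arr = (M.id A).arr) (y : M.Hom A T) :
    ∃ h : M.D y w, (M.merge2 y w h).arr = y.arr := by
  obtain ⟨-, rfl, hw⟩ := Hom.arr_eq_arr_iff.mp hw
  cases hw
  exact ⟨hM.mergeId_D y, Hom.arr_eq_arr_iff.mpr ⟨rfl, hM.mergeId_obj y _, hM.mergeId_2 y _⟩⟩

end ModelSpace

namespace SymLens

open ModelSpace

variable {ι : Type} {ℓ : SymLens ι}

section Congr

variable {i : ι} {R R' : ℓ.Corr} {A' A'' : (ℓ.Sp i).Obj} {u : (ℓ.Sp i).Hom (ℓ.bdry i R) A'}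
  {u' : (ℓ.Sp i).Hom (ℓ.bdry i R') A''}

theorem ppg_arr_congr (hR : R = R') (hu : u.arr = u'.arr) (j : ι) (hj : j ≠ i) :
    (ℓ.ppg i R u j hj).arr = (ℓ.ppg i R' u' j hj).arr := by
  subst hR
  obtain ⟨-, rfl, hu⟩ := Hom.arr_eq_arr_iff.mp hu
  cases hu; rfl

theorem ppgCorr_congr (hR : R = R') (hu : u.arr = u'.arr) :
    ℓ.ppgCorr i R u = ℓ.ppgCorr i R' u' := by
  subst hR
  obtain ⟨-, rfl, hu⟩ := Hom.arr_eq_arr_iff.mp hu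
  cases hu; rfl

end Congr

@[simp]
theorem kppAux_arr (i : ι) (R : ℓ.Corr) {A' B0 : (ℓ.Sp i).Obj}
    (u : (ℓ.Sp i).Hom (ℓ.bdry i R) A') (v : (ℓ.Sp i).Hom A' B0)
    (hD : (ℓ.Sp i).D v (ℓ.amend i R u)) :
    (ℓ.kppAux i R u v hD).arr = ((ℓ.Sp i).merge2 v (ℓ.amend i R u) hD).arr :=
  castSrc_arr _ _

theorem ClosedUpd.amend_arr {i : ι} {X A' : (ℓ.Sp i).Obj} {u : (ℓ.Sp i).Hom X A'}
    (hu : ℓ.ClosedUpd i u) (S : ℓ.Corr) (h : ℓ.bdry i S = X) :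
    (ℓ.amend i S ((ℓ.Sp i).castSrc h.symm u)).arr = ((ℓ.Sp i).id A').arr :=
  Hom.arr_eq_arr_of_heq (hu S h).1 (hu S h).2

namespace WellBehaved

theorem ppg_id_arr (hℓ : ℓ.WellBehaved) (i : ι) (R : ℓ.Corr) (j : ι) (hj : j ≠ i) :
    (ℓ.ppg i R ((ℓ.Sp i).id (ℓ.bdry i R)) j hj).arr = ((ℓ.Sp j).id (ℓ.bdry j R)).arr :=
  Hom.arr_eq_arr_of_heq (hℓ.stab_obj i R j) (hℓ.stab_ppg i R j hj)

theorem amend_id_arr (hℓ : ℓ.WellBehaved) (i : ι) (R : ℓ.Corr) :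
    (ℓ.amend i R ((ℓ.Sp i).id (ℓ.bdry i R))).arr = ((ℓ.Sp i).id (ℓ.bdry i R)).arr :=
  Hom.arr_eq_arr_of_heq (hℓ.stab_obj i R i) (hℓ.stab_amend i R)

theorem ppg_comp_amend_arr (hℓ : ℓ.WellBehaved) (i : ι) (R : ℓ.Corr) {A' : (ℓ.Sp i).Obj}
    (u : (ℓ.Sp i).Hom (ℓ.bdry i R) A') (j : ι) (hj : j ≠ i) :
    (ℓ.ppg i R ((ℓ.Sp i).comp u (ℓ.amend i R u)) j hj).arr = (ℓ.ppg i R u j hj).arr :=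
  Hom.arr_eq_arr_of_heq (hℓ.reflect2_obj i R u j hj) (hℓ.reflect2 i R u j hj)

theorem amend_comp_amend_arr (hℓ : ℓ.WellBehaved) (i : ι) (R : ℓ.Corr) {A' : (ℓ.Sp i).Obj}
    (u : (ℓ.Sp i).Hom (ℓ.bdry i R) A') :
    (ℓ.amend i R ((ℓ.Sp i).comp u (ℓ.amend i R u))).arr =
      ((ℓ.Sp i).id (ℓ.ppgObj i R u i)).arr :=
  Hom.arr_eq_arr_of_heq (hℓ.reflect3_obj i R u) (hℓ.reflect3 i R u)

theorem of_arr
    (stab_ppg : ∀ i R j (hj : j ≠ i),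
      (ℓ.ppg i R ((ℓ.Sp i).id (ℓ.bdry i R)) j hj).arr = ((ℓ.Sp j).id (ℓ.bdry j R)).arr)
    (stab_amend : ∀ i R,
      (ℓ.amend i R ((ℓ.Sp i).id (ℓ.bdry i R))).arr = ((ℓ.Sp i).id (ℓ.bdry i R)).arr)
    (stab_corr : ∀ i R, ℓ.ppgCorr i R ((ℓ.Sp i).id (ℓ.bdry i R)) = R)
    (reflect1 : ∀ i R {A'} (u : (ℓ.Sp i).Hom (ℓ.bdry i R) A'),
      (ℓ.Sp i).K u (ℓ.amend i R u))
    (reflect2 : ∀ i R {A'} (u : (ℓ.Sp i).Hom (ℓ.bdry i R) A') j (hj : j ≠ i),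
      (ℓ.ppg i R ((ℓ.Sp i).comp u (ℓ.amend i R u)) j hj).arr = (ℓ.ppg i R u j hj).arr)
    (reflect3 : ∀ i R {A'} (u : (ℓ.Sp i).Hom (ℓ.bdry i R) A'),
      (ℓ.amend i R ((ℓ.Sp i).comp u (ℓ.amend i R u))).arr =
        ((ℓ.Sp i).id (ℓ.ppgObj i R u i)).arr) :
    ℓ.WellBehaved where
  stab_obj i R j := by
    by_cases hj : j = i
    · subst hj
      exact Hom.tgt_eq_of_arr_eq (stab_amend j R)
    · exact Hom.tgt_eq_of_arr_eq (stab_ppg i R j hj)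
  stab_ppg i R j hj := Hom.heq_of_arr_eq (stab_ppg i R j hj)
  stab_amend i R := Hom.heq_of_arr_eq (stab_amend i R)
  stab_corr := stab_corr
  reflect1 := reflect1
  reflect2_obj i R _ u j hj := Hom.tgt_eq_of_arr_eq (reflect2 i R u j hj)
  reflect2 i R _ u j hj := Hom.heq_of_arr_eq (reflect2 i R u j hj)
  reflect3_obj i R _ u := Hom.tgt_eq_of_arr_eq (reflect3 i R u)
  reflect3 i R _ u := Hom.heq_of_arr_eq (reflect3 i R u)

end WellBehaved

namespace VeryWellBehaved

theorem ppg_comp_arr (hℓ : ℓ.VeryWellBehaved) (i : ι) (R : ℓ.Corr) {A' B0 : (ℓ.Sp i).Obj}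
    (u : (ℓ.Sp i).Hom (ℓ.bdry i R) A') (v : (ℓ.Sp i).Hom A' B0)
    (hK : (ℓ.Sp i).K u v) (hD : (ℓ.Sp i).D v (ℓ.amend i R u)) (j : ι) (hj : j ≠ i) :
    (ℓ.ppg i R ((ℓ.Sp i).comp u v) j hj).arr =
      ((ℓ.Sp j).comp (ℓ.ppg i R u j hj) ((ℓ.Sp j).castSrc (ℓ.ppgCorr_bdry i R u j)
        (ℓ.ppg i (ℓ.ppgCorr i R u) (ℓ.kppAux i R u v hD) j hj))).arr :=
  Hom.arr_eq_arr_of_heq (hℓ.kpp_obj i R u v hK hD j hj) (hℓ.kpp_ppg i R u v hK hD j hj)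

theorem amend_comp_arr (hℓ : ℓ.VeryWellBehaved) (i : ι) (R : ℓ.Corr) {A' B0 : (ℓ.Sp i).Obj}
    (u : (ℓ.Sp i).Hom (ℓ.bdry i R) A') (v : (ℓ.Sp i).Hom A' B0)
    (hK : (ℓ.Sp i).K u v) (hD : (ℓ.Sp i).D v (ℓ.amend i R u)) :
    (ℓ.amend i R ((ℓ.Sp i).comp u v)).arr =
      ((ℓ.Sp i).comp ((ℓ.Sp i).merge1 v (ℓ.amend i R u) hD)
        (ℓ.amend i (ℓ.ppgCorr i R u) (ℓ.kppAux i R u v hD))).arr :=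
  Hom.arr_eq_arr_of_heq (hℓ.kpp_amend_obj i R u v hK hD) (hℓ.kpp_amend i R u v hK hD)

theorem ppg_comp_arr_of_amend_arr_eq_id (hℓ : ℓ.VeryWellBehaved) (i : ι) (R : ℓ.Corr)
    {A' B0 : (ℓ.Sp i).Obj}
    (u : (ℓ.Sp i).Hom (ℓ.bdry i R) A') (v : (ℓ.Sp i).Hom A' B0)
    (hM : (ℓ.Sp i).WellBehaved) (hu : (ℓ.amend i R u).arr = ((ℓ.Sp i).id A').arr)
    (hK : (ℓ.Sp i).K u v) {B1 : (ℓ.Sp i).Obj}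
    (v' : (ℓ.Sp i).Hom (ℓ.bdry i (ℓ.ppgCorr i R u)) B1) (hv' : v'.arr = v.arr)
    (j : ι) (hj : j ≠ i) :
    (ℓ.ppg i R ((ℓ.Sp i).comp u v) j hj).arr =
        ((ℓ.Sp j).comp (ℓ.ppg i R u j hj) ((ℓ.Sp j).castSrc (ℓ.ppgCorr_bdry i R u j)
          (ℓ.ppg i (ℓ.ppgCorr i R u) v' j hj))).arr ∧
      (ℓ.Sp j).K (ℓ.ppg i R u j hj) ((ℓ.Sp j).castSrc (ℓ.ppgCorr_bdry i R u j)
          (ℓ.ppg i (ℓ.ppgCorr i R u) v' j hj)) := by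
  obtain ⟨hD, hmerge⟩ := hM.exists_merge2_arr_of_arr_eq_id hu v
  have hg : ((ℓ.Sp j).castSrc (ℓ.ppgCorr_bdry i R u j)
        (ℓ.ppg i (ℓ.ppgCorr i R u) (ℓ.kppAux i R u v hD) j hj)).arr =
      ((ℓ.Sp j).castSrc (ℓ.ppgCorr_bdry i R u j)
        (ℓ.ppg i (ℓ.ppgCorr i R u) v' j hj)).arr := by
    simp only [castSrc_arr]
    exact ppg_arr_congr rfl (by rw [kppAux_arr, hmerge, hv']) j hj
  exact ⟨(hℓ.ppg_comp_arr i R u v hK hD j hj).trans (comp_arr_congr rfl hg),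
    (K_congr_arr rfl hg).mp (hℓ.kpp_K i R u v hK hD j hj)⟩

theorem of_arr (hℓ : ℓ.WellBehaved)
    (ppg_comp : ∀ i R {A' B0} (u : (ℓ.Sp i).Hom (ℓ.bdry i R) A') (v : (ℓ.Sp i).Hom A' B0),
      (ℓ.Sp i).K u v → ∀ (hD : (ℓ.Sp i).D v (ℓ.amend i R u)) j (hj : j ≠ i),
      (ℓ.ppg i R ((ℓ.Sp i).comp u v) j hj).arr =
        ((ℓ.Sp j).comp (ℓ.ppg i R u j hj) ((ℓ.Sp j).castSrc (ℓ.ppgCorr_bdry i R u j)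
          (ℓ.ppg i (ℓ.ppgCorr i R u) (ℓ.kppAux i R u v hD) j hj))).arr)
    (kpp_K : ∀ i R {A' B0} (u : (ℓ.Sp i).Hom (ℓ.bdry i R) A') (v : (ℓ.Sp i).Hom A' B0),
      (ℓ.Sp i).K u v → ∀ (hD : (ℓ.Sp i).D v (ℓ.amend i R u)) j (hj : j ≠ i),
      (ℓ.Sp j).K (ℓ.ppg i R u j hj) ((ℓ.Sp j).castSrc (ℓ.ppgCorr_bdry i R u j)
        (ℓ.ppg i (ℓ.ppgCorr i R u) (ℓ.kppAux i R u v hD) j hj)))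
    (amend_comp : ∀ i R {A' B0} (u : (ℓ.Sp i).Hom (ℓ.bdry i R) A') (v : (ℓ.Sp i).Hom A' B0),
      (ℓ.Sp i).K u v → ∀ (hD : (ℓ.Sp i).D v (ℓ.amend i R u)),
      (ℓ.amend i R ((ℓ.Sp i).comp u v)).arr =
        ((ℓ.Sp i).comp ((ℓ.Sp i).merge1 v (ℓ.amend i R u) hD)
          (ℓ.amend i (ℓ.ppgCorr i R u) (ℓ.kppAux i R u v hD))).arr) :
    ℓ.VeryWellBehaved where
  toWellBehaved := hℓ
  kpp_obj i R _ _ u v hK hD j hj := Hom.tgt_eq_of_arr_eq (ppg_comp i R u v hK hD j hj)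
  kpp_ppg i R _ _ u v hK hD j hj := Hom.heq_of_arr_eq (ppg_comp i R u v hK hD j hj)
  kpp_K := kpp_K
  kpp_amend_obj i R _ _ u v hK hD := Hom.tgt_eq_of_arr_eq (amend_comp i R u v hK hD)
  kpp_amend i R _ _ u v hK hD := Hom.heq_of_arr_eq (amend_comp i R u v hK hD)

end VeryWellBehaved

end SymLens

namespace BLens

open ModelSpace

variable {B A : ModelSpace} {b : BLens B A} {R R' : b.Corr}

section BaseCongr

variable {B1 B2 : B.Obj} {u : B.Hom (b.bB R) B1} {u' : B.Hom (b.bB R') B2}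

theorem ppgBA_arr_congr (hR : R = R') (hu : u.arr = u'.arr) :
    (b.ppgBA R u).arr = (b.ppgBA R' u').arr := by
  subst hR
  obtain ⟨-, rfl, hu⟩ := Hom.arr_eq_arr_iff.mp hu
  cases hu; rfl

theorem amendB_arr_congr (hR : R = R') (hu : u.arr = u'.arr) :
    (b.amendB R u).arr = (b.amendB R' u').arr := by
  subst hR
  obtain ⟨-, rfl, hu⟩ := Hom.arr_eq_arr_iff.mp hu
  cases hu; rfl

end BaseCongr

section ViewCongr

variable {A1 A2 : A.Obj} {v : A.Hom (b.bA R) A1} {v' : A.Hom (b.bA R') A2}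

theorem ppgAB_arr_congr (hR : R = R') (hv : v.arr = v'.arr) :
    (b.ppgAB R v).arr = (b.ppgAB R' v').arr := by
  subst hR
  obtain ⟨-, rfl, hv⟩ := Hom.arr_eq_arr_iff.mp hv
  cases hv; rfl

theorem ppgABCorr_congr (hR : R = R') (hv : v.arr = v'.arr) :
    b.ppgABCorr R v = b.ppgABCorr R' v' := by
  subst hR
  obtain ⟨-, rfl, hv⟩ := Hom.arr_eq_arr_iff.mp hv
  cases hv; rfl

end ViewCongr

theorem ClosedA.amendA_arr {X A' : A.Obj} {v : A.Hom X A'} (hv : b.ClosedA v) (R : b.Corr)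
    (h : b.bA R = X) : (b.amendA R (A.castSrc h.symm v)).arr = (A.id A').arr :=
  Hom.arr_eq_arr_of_heq (hv R h).1 (hv R h).2

end BLens

theorem StarCorr.ext {ι : Type} {k : SymLens ι} {Bsp : ι → ModelSpace}
    {b : ∀ i, BLens (Bsp i) (k.Sp i)} {R R' : StarCorr k Bsp b} (hS : R.S = R'.S)
    (hrho : R.rho = R'.rho) : R = R' := by
  cases R; cases R'; cases hS; cases hrho; rfl

namespace SymLens

open ModelSpace BLens

section StarComposition

variable {ι : Type} {k : SymLens ι} {Bsp : ι → ModelSpace} {b : ∀ i, BLens (Bsp i) (k.Sp i)}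
  (R : StarCorr k Bsp b) (i : ι) {B' : (Bsp i).Obj} (v : (Bsp i).Hom ((b i).bB (R.rho i)) B')

theorem starU_arr : (starU k Bsp b R i v).arr = ((b i).ppgBA (R.rho i) v).arr :=
  castSrc_arr _ _

theorem starW_arr (j : ι) (hj : j ≠ i) :
    (starW k Bsp b R i v j hj).arr = (k.ppg i R.S (starU k Bsp b R i v) j hj).arr :=
  castSrc_arr _ _

theorem starW_arr_congr {B'' : (Bsp i).Obj} {v' : (Bsp i).Hom ((b i).bB (R.rho i)) B''}
    (h : ((b i).ppgBA (R.rho i) v).arr = ((b i).ppgBA (R.rho i) v').arr) (j : ι) (hj : j ≠ i) :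
    (starW k Bsp b R i v j hj).arr = (starW k Bsp b R i v' j hj).arr := by
  rw [starW_arr, starW_arr]
  exact k.ppg_arr_congr rfl (by rwa [starU_arr, starU_arr]) j hj

theorem starU_id_arr (hb : (b i).WellBehaved) :
    (starU k Bsp b R i ((Bsp i).id ((b i).bB (R.rho i)))).arr =
      ((k.Sp i).id (k.bdry i R.S)).arr :=
  calc _ = ((b i).ppgBA (R.rho i) ((Bsp i).id ((b i).bB (R.rho i)))).arr := starU_arr ..
    _ = ((k.Sp i).id ((b i).bA (R.rho i))).arr :=
        hb.ppg_id_arr false (R.rho i) true (by decide)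
    _ = _ := id_arr_congr (R.compat i)

theorem starW_id_arr (hk : k.WellBehaved) (hb : (b i).WellBehaved) (j : ι) (hj : j ≠ i) :
    (starW k Bsp b R i ((Bsp i).id ((b i).bB (R.rho i))) j hj).arr =
      ((k.Sp j).id ((b j).bA (R.rho j))).arr :=
  calc _ = (k.ppg i R.S ((k.Sp i).id (k.bdry i R.S)) j hj).arr :=
        (starW_arr ..).trans (k.ppg_arr_congr rfl (starU_id_arr R i hb) j hj)
    _ = ((k.Sp j).id (k.bdry j R.S)).arr := hk.ppg_id_arr i R.S j hj
    _ = _ := id_arr_congr (R.compat j).symm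

variable [DecidableEq ι]
  {J1 : ∀ (i : ι) (R : (b i).Corr) {B' : (Bsp i).Obj}
      (u : (Bsp i).Hom ((b i).bB R) B'), k.ClosedUpd i ((b i).ppgBA R u)}
  {J2 : ∀ (i j : ι) (hj : j ≠ i) (S : k.Corr) {A' : (k.Sp i).Obj}
      (u : (k.Sp i).Hom (k.bdry i S) A'), (b j).ClosedA (k.ppg i S u j hj)}

theorem star_ppg_arr (j : ι) (hj : j ≠ i) :
    ((star k Bsp b J1 J2).ppg i R v j hj).arr =
      ((b j).ppgAB (R.rho j) (starW k Bsp b R i v j hj)).arr :=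
  castTgt_arr (dif_neg hj).symm _

theorem star_amend_arr :
    ((star k Bsp b J1 J2).amend i R v).arr = ((b i).amendB (R.rho i) v).arr :=
  castTgt_arr (dif_pos rfl).symm _

theorem star_ppgCorr_rho_self :
    ((star k Bsp b J1 J2).ppgCorr i R v).rho i = (b i).ppgBACorr (R.rho i) v := by
  change dite _ _ _ = _
  rw [dif_pos rfl]
  rfl

theorem star_ppgCorr_rho_of_ne (j : ι) (hj : j ≠ i) :
    ((star k Bsp b J1 J2).ppgCorr i R v).rho j =
      (b j).ppgABCorr (R.rho j) (starW k Bsp b R i v j hj) :=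
  dif_neg hj

theorem star_wellBehaved (hk : k.WellBehaved) (hb : ∀ i, (b i).WellBehaved) :
    (star k Bsp b J1 J2).WellBehaved := by
  refine WellBehaved.of_arr (fun i R j hj => ?_) (fun i R => ?_) (fun i R => ?_)
    (fun i R _ v => ?_) (fun i R _ v j hj => ?_) (fun i R _ v => ?_)
  · exact (star_ppg_arr R i _ j hj).trans
      ((ppgAB_arr_congr rfl (starW_id_arr R i hk (hb i) j hj)).trans
        ((hb j).ppg_id_arr true (R.rho j) false (by decide)))
  · exact (star_amend_arr R i _).trans ((hb i).amend_id_arr false (R.rho i))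
  · refine StarCorr.ext ((k.ppgCorr_congr rfl (starU_id_arr R i (hb i))).trans
      (hk.stab_corr i R.S)) (funext fun j => ?_)
    by_cases hj : j = i
    · subst hj
      exact (star_ppgCorr_rho_self R j _).trans ((hb j).stab_corr false (R.rho j))
    · exact (star_ppgCorr_rho_of_ne R i _ j hj).trans
        ((ppgABCorr_congr rfl (starW_id_arr R i hk (hb i) j hj)).trans
          ((hb j).stab_corr true (R.rho j)))
  · exact (K_congr_arr rfl (star_amend_arr R i v)).mpr ((hb i).reflect1 false (R.rho i) v)
  · have hcomp := comp_arr_congr (f := v) rfl (star_amend_arr (J1 := J1) (J2 := J2) R i v)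
    refine (star_ppg_arr R i _ j hj).trans (Eq.trans ?_ (star_ppg_arr R i v j hj).symm)
    refine ppgAB_arr_congr rfl (starW_arr_congr R i _ ?_ j hj)
    exact (ppgBA_arr_congr rfl hcomp).trans
      ((hb i).ppg_comp_amend_arr false (R.rho i) v true (by decide))
  · have hcomp := comp_arr_congr (f := v) rfl (star_amend_arr (J1 := J1) (J2 := J2) R i v)
    exact (star_amend_arr R i _).trans ((amendB_arr_congr rfl hcomp).trans
      (((hb i).amend_comp_amend_arr false (R.rho i) v).trans
        (id_arr_congr (Hom.tgt_eq_of_arr_eq (star_amend_arr R i v)).symm)))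

section KPutput

variable {i : ι} {R : StarCorr k Bsp b} {B1 B2 : (Bsp i).Obj}
  (u : (Bsp i).Hom ((b i).bB (R.rho i)) B1) (v : (Bsp i).Hom B1 B2)

theorem star_kppAux_arr (hD : (Bsp i).D v ((star k Bsp b J1 J2).amend i R u))
    (hD' : (Bsp i).D v ((b i).amendB (R.rho i) u)) :
    ((star k Bsp b J1 J2).kppAux i R u v hD).arr =
      ((b i).toSym.kppAux false (R.rho i) u v hD').arr :=
  (kppAux_arr ..).trans
    ((merge_arr_congr (f := v) rfl (star_amend_arr R i u) hD hD').2.trans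
      (kppAux_arr (ℓ := (b i).toSym) false (R.rho i) u v hD').symm)

theorem star_amend_comp_arr (hb : (b i).VeryWellBehaved) (hK : (Bsp i).K u v)
    (hD : (Bsp i).D v ((star k Bsp b J1 J2).amend i R u)) :
    ((star k Bsp b J1 J2).amend i R ((Bsp i).comp u v)).arr =
      ((Bsp i).comp ((Bsp i).merge1 v ((star k Bsp b J1 J2).amend i R u) hD)
        ((star k Bsp b J1 J2).amend i ((star k Bsp b J1 J2).ppgCorr i R u)
          ((star k Bsp b J1 J2).kppAux i R u v hD))).arr := by
  have hD' := (D_congr_arr (f := v) rfl (star_amend_arr R i u)).mp hD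
  refine (star_amend_arr R i _).trans ((hb.amend_comp_arr false (R.rho i) u v hK hD').trans ?_)
  refine comp_arr_congr (merge_arr_congr rfl (star_amend_arr R i u) hD hD').1.symm ?_
  exact (amendB_arr_congr (star_ppgCorr_rho_self R i u).symm
    (star_kppAux_arr u v hD hD').symm).trans (star_amend_arr _ i _).symm

theorem starW_comp_arr (hk : k.VeryWellBehaved) (hb : (b i).VeryWellBehaved)
    (hA : (k.Sp i).WellBehaved) (hK : (Bsp i).K u v)
    (hD : (Bsp i).D v ((star k Bsp b J1 J2).amend i R u)) (j : ι) (hj : j ≠ i) :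
    (starW k Bsp b R i ((Bsp i).comp u v) j hj).arr =
        ((k.Sp j).comp (starW k Bsp b R i u j hj) ((k.Sp j).castSrc
          ((((star k Bsp b J1 J2).ppgCorr i R u).compat j).trans
            (k.ppgCorr_bdry i R.S (starU k Bsp b R i u) j))
          (starW k Bsp b ((star k Bsp b J1 J2).ppgCorr i R u) i
            ((star k Bsp b J1 J2).kppAux i R u v hD) j hj))).arr ∧
      (k.Sp j).K (starW k Bsp b R i u j hj) ((k.Sp j).castSrc
          ((((star k Bsp b J1 J2).ppgCorr i R u).compat j).trans
            (k.ppgCorr_bdry i R.S (starU k Bsp b R i u) j))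
          (starW k Bsp b ((star k Bsp b J1 J2).ppgCorr i R u) i
            ((star k Bsp b J1 J2).kppAux i R u v hD) j hj)) := by
  have hD' := (D_congr_arr (f := v) rfl (star_amend_arr R i u)).mp hD
  have hbi := hb.ppg_comp_arr false (R.rho i) u v hK hD' true (by decide)
  have hU := (starU_arr R i _).trans (hbi.trans (comp_arr_congr (starU_arr R i u).symm rfl))
  have hUK := (K_congr_arr (starU_arr R i u) rfl).mpr
    (hb.kpp_K false (R.rho i) u v hK hD' true (by decide))
  have hkpp := hk.ppg_comp_arr_of_amend_arr_eq_id i R.S (starU k Bsp b R i u) _ hA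
    ((J1 i (R.rho i) u).amend_arr R.S (R.compat i).symm) hUK
    (starU k Bsp b ((star k Bsp b J1 J2).ppgCorr i R u) i ((star k Bsp b J1 J2).kppAux i R u v hD))
    ((starU_arr ..).trans ((ppgBA_arr_congr (star_ppgCorr_rho_self R i u)
      (star_kppAux_arr u v hD hD')).trans (castSrc_arr _ _).symm)) j hj
  have hW' := starW_arr ((star k Bsp b J1 J2).ppgCorr i R u) i
    ((star k Bsp b J1 J2).kppAux i R u v hD) j hj
  refine ⟨(starW_arr R i _ j hj).trans ((k.ppg_arr_congr rfl hU j hj).trans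
      (hkpp.1.trans (comp_arr_congr (starW_arr R i u j hj).symm ?_))),
    (K_congr_arr (starW_arr R i u j hj).symm ?_).mp hkpp.2⟩ <;>
  · simp only [castSrc_arr]
    exact hW'.symm

theorem star_ppg_comp_arr (hk : k.VeryWellBehaved) (hb : ∀ i, (b i).VeryWellBehaved)
    (hA : ∀ i, (k.Sp i).WellBehaved) (hK : (Bsp i).K u v)
    (hD : (Bsp i).D v ((star k Bsp b J1 J2).amend i R u)) (j : ι) (hj : j ≠ i) :
    ((star k Bsp b J1 J2).ppg i R ((Bsp i).comp u v) j hj).arr =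
        ((Bsp j).comp ((star k Bsp b J1 J2).ppg i R u j hj)
          ((Bsp j).castSrc ((star k Bsp b J1 J2).ppgCorr_bdry i R u j)
            ((star k Bsp b J1 J2).ppg i ((star k Bsp b J1 J2).ppgCorr i R u)
              ((star k Bsp b J1 J2).kppAux i R u v hD) j hj))).arr ∧
      (Bsp j).K ((star k Bsp b J1 J2).ppg i R u j hj)
        ((Bsp j).castSrc ((star k Bsp b J1 J2).ppgCorr_bdry i R u j)
          ((star k Bsp b J1 J2).ppg i ((star k Bsp b J1 J2).ppgCorr i R u)
            ((star k Bsp b J1 J2).kppAux i R u v hD) j hj)) := by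
  obtain ⟨hW, hWK⟩ := starW_comp_arr u v hk (hb i) (hA i) hK hD j hj
  have hrho := star_ppgCorr_rho_of_ne (J1 := J1) (J2 := J2) R i u j hj
  have hkpp := (hb j).ppg_comp_arr_of_amend_arr_eq_id true (R.rho j) (starW k Bsp b R i u j hj) _
    (hA j) ((J2 i j hj R.S (starU k Bsp b R i u)).amendA_arr (R.rho j) (R.compat j)) hWK
    ((k.Sp j).castSrc (congrArg (b j).bA hrho) (starW k Bsp b ((star k Bsp b J1 J2).ppgCorr i R u)
      i ((star k Bsp b J1 J2).kppAux i R u v hD) j hj))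
    ((castSrc_arr _ _).trans (castSrc_arr _ _).symm)
    false (by decide)
  refine ⟨(star_ppg_arr R i _ j hj).trans ((ppgAB_arr_congr rfl hW).trans
      (hkpp.1.trans (comp_arr_congr (star_ppg_arr R i u j hj).symm ?_))),
    (K_congr_arr (star_ppg_arr R i u j hj).symm ?_).mp hkpp.2⟩ <;>
  exact (castSrc_arr _ _).trans ((ppgAB_arr_congr hrho.symm (castSrc_arr _ _)).trans
    ((star_ppg_arr _ i _ j hj).symm.trans (castSrc_arr _ _).symm))

theorem star_veryWellBehaved (hk : k.VeryWellBehaved) (hb : ∀ i, (b i).VeryWellBehaved)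
    (hA : ∀ i, (k.Sp i).WellBehaved) : (star k Bsp b J1 J2).VeryWellBehaved :=
  VeryWellBehaved.of_arr
    (star_wellBehaved hk.toWellBehaved fun i => (hb i).toWellBehaved)
    (fun _ _ _ _ u v hK hD j hj => (star_ppg_comp_arr u v hk hb hA hK hD j hj).1)
    (fun _ _ _ _ u v hK hD j hj => (star_ppg_comp_arr u v hk hb hA hK hD j hj).2)
    (fun i _ _ _ u v hK hD => star_amend_comp_arr u v (hb i) hK hD)

end KPutput

end StarComposition

end SymLens

theorem stmt11_general {ι : Type} [DecidableEq ι] (k : SymLens ι) (Bsp : ι → ModelSpace)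
    (b : ∀ i, BLens (Bsp i) (k.Sp i))
    (J1 : ∀ (i : ι) (R : (b i).Corr) {B' : (Bsp i).Obj}
      (u : (Bsp i).Hom ((b i).bB R) B'), k.ClosedUpd i ((b i).ppgBA R u))
    (J2 : ∀ (i j : ι) (hj : j ≠ i) (S : k.Corr) {A' : (k.Sp i).Obj}
      (u : (k.Sp i).Hom (k.bdry i S) A'), (b j).ClosedA (k.ppg i S u j hj))
    (hA : ∀ i, (k.Sp i).WellBehaved) :
    ((k.WellBehaved ∧ ∀ i, (b i).WellBehaved) →
      (SymLens.star k Bsp b J1 J2).WellBehaved) ∧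
    ((k.VeryWellBehaved ∧ ∀ i, (b i).VeryWellBehaved) →
      (SymLens.star k Bsp b J1 J2).VeryWellBehaved) :=
  ⟨fun ⟨hk, hb⟩ => SymLens.star_wellBehaved hk hb,
    fun ⟨hk, hb⟩ => SymLens.star_veryWellBehaved hk hb hA⟩

/-- Star composition preserves (very) well-behavedness: over
well-behaved model spaces and under the junction conditions, if the central lens
and all peripheral binary lenses are (very) well-behaved, so is the composition. -/
theorem stmt11 {ι : Type} [DecidableEq ι] (k : SymLens ι) (Bsp : ι → ModelSpace)
    (b : ∀ i, BLens (Bsp i) (k.Sp i))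
    (J1 : ∀ (i : ι) (R : (b i).Corr) {B' : (Bsp i).Obj}
      (u : (Bsp i).Hom ((b i).bB R) B'), k.ClosedUpd i ((b i).ppgBA R u))
    (J2 : ∀ (i j : ι) (hj : j ≠ i) (S : k.Corr) {A' : (k.Sp i).Obj}
      (u : (k.Sp i).Hom (k.bdry i S) A'), (b j).ClosedA (k.ppg i S u j hj))
    (hB : ∀ i, (Bsp i).WellBehaved) (hA : ∀ i, (k.Sp i).WellBehaved) :
    ((k.WellBehaved ∧ ∀ i, (b i).WellBehaved) →
      (SymLens.star k Bsp b J1 J2).WellBehaved) ∧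
    ((k.VeryWellBehaved ∧ ∀ i, (b i).VeryWellBehaved) →
      (SymLens.star k Bsp b J1 J2).VeryWellBehaved) :=
  stmt11_general k Bsp b J1 J2 hA
end

section
/- Every well-behaved asymmetric lens is weakly invertible: for any base B and view update v : get(B) → A', put_base(get(put_base(v))) = put_base(v). -/
set_option autoImplicit false

/-- An asymmetric lens with amendment: view space `A`, base space `B`,
a functorial `get`, and a `put` with view-side amendment. -/
structure ALens (A B : ModelSpace) where
  get : B.Obj → A.Obj
  getH : {X Y : B.Obj} → B.Hom X Y → A.Hom (get X) (get Y)
  getH_id : ∀ (X : B.Obj), getH (B.id X) = A.id (get X)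
  getH_comp : ∀ {X Y Z : B.Obj} (f : B.Hom X Y) (g : B.Hom Y Z),
    getH (B.comp f g) = A.comp (getH f) (getH g)
  putObj : (B0 : B.Obj) → {A' : A.Obj} → A.Hom (get B0) A' → B.Obj
  put : (B0 : B.Obj) → {A' : A.Obj} → (v : A.Hom (get B0) A') → B.Hom B0 (putObj B0 v)
  amendObj : (B0 : B.Obj) → {A' : A.Obj} → A.Hom (get B0) A' → A.Obj
  amend : (B0 : B.Obj) → {A' : A.Obj} → (v : A.Hom (get B0) A') → A.Hom A' (amendObj B0 v)
/-- Well-behavedness of an asymmetric lens: Stability, Reflect0-2, PutGet. -/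
structure ALens.WellBehaved {A B : ModelSpace} (ℓ : ALens A B) : Prop where
  stab_putObj : ∀ (B0 : B.Obj), ℓ.putObj B0 (A.id (ℓ.get B0)) = B0
  stab_put : ∀ (B0 : B.Obj), HEq (ℓ.put B0 (A.id (ℓ.get B0))) (B.id B0)
  stab_amendObj : ∀ (B0 : B.Obj), ℓ.amendObj B0 (A.id (ℓ.get B0)) = ℓ.get B0
  stab_amend : ∀ (B0 : B.Obj),
    HEq (ℓ.amend B0 (A.id (ℓ.get B0))) (A.id (ℓ.get B0))
  reflect0_obj : ∀ {B0 B' : B.Obj} (u : B.Hom B0 B'),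
    ℓ.amendObj B0 (ℓ.getH u) = ℓ.get B'
  reflect0 : ∀ {B0 B' : B.Obj} (u : B.Hom B0 B'),
    HEq (ℓ.amend B0 (ℓ.getH u)) (A.id (ℓ.get B'))
  reflect1 : ∀ (B0 : B.Obj) {A' : A.Obj} (v : A.Hom (ℓ.get B0) A'),
    A.K v (ℓ.amend B0 v)
  reflect2_obj : ∀ (B0 : B.Obj) {A' : A.Obj} (v : A.Hom (ℓ.get B0) A'),
    ℓ.putObj B0 (A.comp v (ℓ.amend B0 v)) = ℓ.putObj B0 v
  reflect2 : ∀ (B0 : B.Obj) {A' : A.Obj} (v : A.Hom (ℓ.get B0) A'),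
    HEq (ℓ.put B0 (A.comp v (ℓ.amend B0 v))) (ℓ.put B0 v)
  putget_obj : ∀ (B0 : B.Obj) {A' : A.Obj} (v : A.Hom (ℓ.get B0) A'),
    ℓ.get (ℓ.putObj B0 v) = ℓ.amendObj B0 v
  putget : ∀ (B0 : B.Obj) {A' : A.Obj} (v : A.Hom (ℓ.get B0) A'),
    HEq (ℓ.getH (ℓ.put B0 v)) (A.comp v (ℓ.amend B0 v))
/-- Every well-behaved asymmetric lens is weakly invertible:
`put(get(put(v))) = put(v)`. -/
theorem stmt13 {A B : ModelSpace} (ℓ : ALens A B) (h : ℓ.WellBehaved)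
    (B0 : B.Obj) {A' : A.Obj} (v : A.Hom (ℓ.get B0) A') :
    ℓ.putObj B0 (ℓ.getH (ℓ.put B0 v)) = ℓ.putObj B0 v ∧
    HEq (ℓ.put B0 (ℓ.getH (ℓ.put B0 v))) (ℓ.put B0 v) := by
  have key : ∀ {X Y : A.Obj} (f : A.Hom (ℓ.get B0) X) (g : A.Hom (ℓ.get B0) Y),
      X = Y → HEq f g →
      ℓ.putObj B0 f = ℓ.putObj B0 g ∧ HEq (ℓ.put B0 f) (ℓ.put B0 g) := by
    intro X Y f g hXY hfg
    subst hXY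
    rw [eq_of_heq hfg]
    exact ⟨rfl, HEq.rfl⟩
  obtain ⟨e1, e2⟩ := key (ℓ.getH (ℓ.put B0 v)) (A.comp v (ℓ.amend B0 v))
    (h.putget_obj B0 v) (h.putget B0 v)
  exact ⟨e1.trans (h.reflect2_obj B0 v), e2.trans (h.reflect2 B0 v)⟩
end
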